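/- arXiv:1503.06506 — 4 statements merged into one kernel-verified Lean document; each statement's English description precedes it below -/
import Mathlib

section
/- Let G be a TLG on {1,…,N} (N ≥ 3) in which vertex 1 is adjacent exactly to vertices 2 and 3 and (2,3) ∈ E, let (f_ij) ∈ 𝓕^{|E|}, and let p be an equilibrium line configuration of the RMA system on the a-axis. Then the sub-configuration p* = (x_2,…,x_N) is an equilibrium line configuration of the reduced system associated with p. -/
open Set Filter Topology MeasureTheory Matrix Function

attribute [local instance] Classical.propDecidable

noncomputable section

/-- `f̃(d) = d * f(d)`. -/
def tildeFn (f : ℝ → ℝ) : ℝ → ℝ := fun d => d * f d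

/-- Membership in the class `𝓕` of monotone interaction laws:
`f` is `C¹` on `ℝ₊ = (0,∞)`, `f̃′ > 0` on `ℝ₊`, `f̃` has a zero, and
`∫_d^1 f̃(x) dx → −∞` as `d → 0⁺`. -/
def MemF (f : ℝ → ℝ) : Prop :=
  ContDiffOn ℝ 1 f (Set.Ioi 0) ∧
  (∀ d > (0:ℝ), 0 < deriv (tildeFn f) d) ∧
  (∃ d > (0:ℝ), tildeFn f d = 0) ∧
  Tendsto (fun d => ∫ x in d..(1:ℝ), tildeFn f x) (𝓝[>] (0:ℝ)) atBot

/-- The space `C¹(ℝ₊, ℝ)`. -/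
def C1Pos : Type := {f : ℝ → ℝ // ContDiffOn ℝ 1 f (Set.Ioi 0)}

/-- The Whitney `C¹`-topology on `C¹(ℝ₊, ℝ)`, generated by the basic open sets
`B_δ(f) = {g : |g(d) − f(d)| + |g′(d) − f′(d)| < δ(d) for all d > 0}`. -/
instance : TopologicalSpace C1Pos :=
  TopologicalSpace.generateFrom
    { S | ∃ (f : C1Pos) (δ : ℝ → ℝ), ContinuousOn δ (Set.Ioi 0) ∧ (∀ d > (0:ℝ), 0 < δ d) ∧
        S = { g : C1Pos | ∀ d > (0:ℝ), |g.1 d - f.1 d| + |deriv g.1 d - deriv f.1 d| < δ d } }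

/-- The class `𝓕` as a topological space (subspace of `C¹(ℝ₊,ℝ)`). -/
def FF : Type := {f : C1Pos // MemF f.1}

instance : TopologicalSpace FF := instTopologicalSpaceSubtype

/-- `G` is a triangulated Laman graph: there is a Henneberg-type construction order
(a relabeling `σ`) starting from the edge between the first two vertices, in which every
later vertex is joined to exactly two earlier, adjacent, vertices. -/
def IsTLG {N : ℕ} (G : SimpleGraph (Fin N)) : Prop :=
  2 ≤ N ∧
  ∃ (σ : Equiv.Perm (Fin N)) (par₁ par₂ : Fin N → Fin N),
    (∀ k : Fin N, 2 ≤ (k : ℕ) →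
      ((par₁ k : ℕ) < (k : ℕ) ∧ (par₂ k : ℕ) < (k : ℕ) ∧ par₁ k ≠ par₂ k ∧
        G.Adj (σ (par₁ k)) (σ (par₂ k)))) ∧
    (∀ i j : Fin N, G.Adj (σ i) (σ j) ↔
      (((i : ℕ) = 0 ∧ (j : ℕ) = 1) ∨ ((i : ℕ) = 1 ∧ (j : ℕ) = 0) ∨
       (2 ≤ (i : ℕ) ∧ (j = par₁ i ∨ j = par₂ i)) ∨
       (2 ≤ (j : ℕ) ∧ (i = par₁ j ∨ i = par₂ j))))

/-- Euclidean distance on `ℝ²` (coordinates `(a,b)`). -/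
def dist2 (x y : ℝ × ℝ) : ℝ := Real.sqrt ((x.1 - y.1)^2 + (x.2 - y.2)^2)

/-- `p` belongs to the configuration space `P`: no collision of adjacent agents. -/
def InConfigSpace {N : ℕ} (G : SimpleGraph (Fin N)) (p : Fin N → ℝ × ℝ) : Prop :=
  ∀ i j, G.Adj i j → p i ≠ p j

/-- `p` is an equilibrium of the RMA system `ẋᵢ = Σ_{j : (i,j) ∈ E} f_ij(d_ij)(x_j − x_i)`. -/
def IsEquilibrium {N : ℕ} (G : SimpleGraph (Fin N)) (f : Fin N → Fin N → ℝ → ℝ)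
    (p : Fin N → ℝ × ℝ) : Prop :=
  ∀ i, (∑ j, if G.Adj i j then (f i j (dist2 (p i) (p j))) • (p j - p i) else (0:ℝ×ℝ)) = 0

/-- The potential function `Φ(p) = Σ_{(i,j) ∈ E} ∫_1^{d_ij} x f_ij(x) dx`
(each edge counted once; the factor 1/2 compensates the double count over ordered pairs). -/
def potential {N : ℕ} (G : SimpleGraph (Fin N)) (f : Fin N → Fin N → ℝ → ℝ)
    (p : Fin N → ℝ × ℝ) : ℝ :=
  (1/2) * ∑ i, ∑ j, if G.Adj i j then ∫ x in (1:ℝ)..(dist2 (p i) (p j)), x * f i j x else 0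

/-- Coordinate directions on the configuration space, in the order `(a₁,…,a_N,b₁,…,b_N)`. -/
def basisVec {N : ℕ} : (Fin N ⊕ Fin N) → (Fin N → ℝ × ℝ) :=
  Sum.elim (fun i => Pi.single i ((1:ℝ), (0:ℝ))) (fun i => Pi.single i ((0:ℝ), (1:ℝ)))

/-- The Hessian matrix of `Φ` at `p` in the coordinates `(a₁,…,a_N,b₁,…,b_N)`. -/
def hessian {N : ℕ} (Φ : (Fin N → ℝ × ℝ) → ℝ) (p : Fin N → ℝ × ℝ) :
    Matrix (Fin N ⊕ Fin N) (Fin N ⊕ Fin N) ℝ :=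
  Matrix.of fun u v => fderiv ℝ (fun q => fderiv ℝ Φ q (basisVec v)) p (basisVec u)

/-- The inertia `𝐧(M) = (n₊(M), n₀(M), n₋(M))` of a real symmetric matrix: the numbers of
positive, zero, and negative eigenvalues (counted with multiplicity). -/
def inertia {m : Type*} [Fintype m] [DecidableEq m] (M : Matrix m m ℝ) : ℕ × ℕ × ℕ :=
  if h : M.IsHermitian then
    ((Finset.univ.filter fun i => 0 < h.eigenvalues i).card,
     (Finset.univ.filter fun i => h.eigenvalues i = 0).card,
     (Finset.univ.filter fun i => h.eigenvalues i < 0).card)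
  else (0, 0, 0)

/-- The number `n₀(M)` of zero eigenvalues of a real symmetric matrix. -/
def n0 {m : Type*} [Fintype m] [DecidableEq m] (M : Matrix m m ℝ) : ℕ := (inertia M).2.1

/-- The vector-valued sign function. -/
def sgn3 (x : ℝ) : ℕ × ℕ × ℕ :=
  if 0 < x then (1,0,0) else if x = 0 then (0,1,0) else (0,0,1)

/-- `q` lies in the `SE(2)`-orbit of `p` (rigid motions: rotation by `(c,s)` with
`c² + s² = 1` followed by translation by `(vx,vy)`). -/
def sameOrbit {N : ℕ} (p q : Fin N → ℝ × ℝ) : Prop :=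
  ∃ c s vx vy : ℝ, c^2 + s^2 = 1 ∧
    ∀ i, q i = (c * (p i).1 - s * (p i).2 + vx, s * (p i).1 + c * (p i).2 + vy)

/-- The interaction laws determined by an ensemble `ω ∈ 𝓕^{|E|}`. -/
def ensembleLaws {N : ℕ} {G : SimpleGraph (Fin N)} (ω : G.edgeSet → FF) :
    Fin N → Fin N → ℝ → ℝ :=
  fun i j => if h : G.Adj i j then (ω ⟨s(i,j), G.mem_edgeSet.mpr h⟩).1.1 else 0

/-- The line configuration on the `a`-axis with coordinates `a`. -/
def lineConfig {N : ℕ} (a : Fin N → ℝ) : Fin N → ℝ × ℝ := fun i => (a i, 0)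

/-- The matrix `F_p` of a line configuration with coordinates `a`: symmetric, zero row sums,
off-diagonal entries `φ_ij(d_ij)` on edges and `0` otherwise. -/
def FMat {N : ℕ} (G : SimpleGraph (Fin N)) (φ : Fin N → Fin N → ℝ → ℝ)
    (a : Fin N → ℝ) : Matrix (Fin N) (Fin N) ℝ :=
  Matrix.of fun i j =>
    if i = j then -∑ k, (if G.Adj i k then φ i k |a i - a k| else 0)
    else if G.Adj i j then φ i j |a i - a j| else 0

/-- The matrix `d̃F_p`: off-diagonal entries `f̃′_ij(d_ij)` on edges. -/
def dFMat {N : ℕ} (G : SimpleGraph (Fin N)) (f : Fin N → Fin N → ℝ → ℝ)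
    (a : Fin N → ℝ) : Matrix (Fin N) (Fin N) ℝ :=
  FMat G (fun i j d => deriv (tildeFn (f i j)) d) a

/-- Case 1 balanced distance: the (generically unique) `d₁₂(d)` with `0 < d₁₂ < d` and
`f̃₁₂(d₁₂) = f̃₁₃(d − d₁₂)`. -/
def case1d12 (f12 f13 : ℝ → ℝ) (d : ℝ) : ℝ :=
  Classical.epsilon fun t => 0 < t ∧ t < d ∧ tildeFn f12 t = tildeFn f13 (d - t)

/-- The case-1 virtual interaction: `g̃₂₃(d) = f̃₁₂(d₁₂(d))`. -/
def g23Case1 (f12 f13 : ℝ → ℝ) : ℝ → ℝ :=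
  fun d => tildeFn f12 (case1d12 f12 f13 d) / d

/-- Case 2 balanced distance: the (generically unique) `d₁₂(d) > 0` with
`f̃₁₂(d₁₂) + f̃₁₃(d₁₂ + d) = 0`. -/
def case2d12 (f12 f13 : ℝ → ℝ) (d : ℝ) : ℝ :=
  Classical.epsilon fun t => 0 < t ∧ tildeFn f12 t + tildeFn f13 (t + d) = 0

/-- The case-2 virtual interaction: `g̃₂₃(d) = f̃₁₃(d₁₃(d))`, `d₁₃(d) = d₁₂(d) + d`. -/
def g23Case2 (f12 f13 : ℝ → ℝ) : ℝ → ℝ :=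
  fun d => tildeFn f13 (case2d12 f12 f13 d + d) / d

/-- The case-3 virtual interaction: case 2 with the roles of agents 2,3 (and `f₁₂`,`f₁₃`)
interchanged. -/
def g23Case3 (f12 f13 : ℝ → ℝ) : ℝ → ℝ := g23Case2 f13 f12

/-- The virtual interaction between agents 2 and 3 induced by `f₁₂`, `f₁₃`, chosen according
to which of the three aligned agents (at coordinates `a1`, `a2`, `a3`) lies between the
other two. -/
def virtualG (f12 f13 : ℝ → ℝ) (a1 a2 a3 : ℝ) : ℝ → ℝ :=
  if (a2 < a1 ∧ a1 < a3) ∨ (a3 < a1 ∧ a1 < a2) then g23Case1 f12 f13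
  else if (a1 < a2 ∧ a2 < a3) ∨ (a3 < a2 ∧ a2 < a1) then g23Case2 f12 f13
  else g23Case3 f12 f13

/-- The interaction laws of the reduced system: vertex `0` (the last Henneberg vertex,
the paper's vertex 1) is deleted, reduced vertex `i` is original vertex `i+1`, and the law on
the reduced edge `(0,1)` (the paper's edge `(2,3)`) is `f*₂₃ = f₂₃ + g₂₃`. -/
def reducedLaws {n : ℕ} (f : Fin (n+3) → Fin (n+3) → ℝ → ℝ) (g : ℝ → ℝ) :
    Fin (n+2) → Fin (n+2) → ℝ → ℝ :=
  fun i j => if (i = 0 ∧ j = 1) ∨ (i = 1 ∧ j = 0)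
    then fun d => f i.succ j.succ d + g d
    else f i.succ j.succ

end

/-! Agent 0 interacts only with agents 1 and 2, so at equilibrium the two forces it feels
cancel. Whichever of the three aligned agents lies in the middle, this balance is precisely the
relation defining the balanced distances of the virtual law `g`; as `f̃₁₂` and `f̃₁₃` are
strictly increasing, these distances are unique, so the ones chosen in the definition of `g`
are the actual ones. Consequently the virtual interaction on edge `(1,2)` exerts on agents 1
and 2 exactly the forces agent 0 exerted on them, and deleting agent 0 while adding `g` to
`f₁₂` leaves every remaining row of the equilibrium equations unchanged. -/

theorem MemF.strictMonoOn_tildeFn {f : ℝ → ℝ} (hf : MemF f) :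
    StrictMonoOn (tildeFn f) (Ioi 0) := by
  refine strictMonoOn_of_deriv_pos (convex_Ioi 0)
    (continuousOn_id.mul hf.1.continuousOn) fun x hx => ?_
  rw [interior_Ioi] at hx
  exact hf.2.1 x hx

theorem Classical.epsilon_eq_of_forall_eq {α : Type*} [Nonempty α] {p : α → Prop} {a : α}
    (ha : p a) (h : ∀ b, p b → b = a) : Classical.epsilon p = a :=
  h _ (Classical.epsilon_spec ⟨a, ha⟩)

section BalancedDistance

variable {f12 f13 : ℝ → ℝ}

theorem case1d12_eq (hm12 : StrictMonoOn (tildeFn f12) (Ioi 0))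
    (hm13 : StrictMonoOn (tildeFn f13) (Ioi 0)) {d t : ℝ} (ht : t ∈ Ioo 0 d)
    (hbal : tildeFn f12 t = tildeFn f13 (d - t)) : case1d12 f12 f13 d = t := by
  have hφ : StrictMonoOn (fun x => tildeFn f12 x - tildeFn f13 (d - x)) (Ioo 0 d) := by
    intro x hx y hy hxy
    have := hm12 hx.1 hy.1 hxy
    have := hm13 (sub_pos.2 hy.2) (sub_pos.2 hx.2) (by linarith)
    dsimp only
    linarith
  refine Classical.epsilon_eq_of_forall_eq ⟨ht.1, ht.2, hbal⟩ fun s ⟨hs0, hsd, hs⟩ => ?_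
  exact hφ.injOn ⟨hs0, hsd⟩ ht (by simp only [hs, hbal, sub_self])

theorem case2d12_eq (hm12 : StrictMonoOn (tildeFn f12) (Ioi 0))
    (hm13 : StrictMonoOn (tildeFn f13) (Ioi 0)) {d t : ℝ} (hd : 0 < d) (ht : 0 < t)
    (hbal : tildeFn f12 t + tildeFn f13 (t + d) = 0) : case2d12 f12 f13 d = t := by
  have hφ : StrictMonoOn (fun x => tildeFn f12 x + tildeFn f13 (x + d)) (Ioi 0) := by
    intro x hx y hy hxy
    have := hm12 hx hy hxy
    have := hm13 (add_pos hx hd) (add_pos hy hd) (by linarith)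
    dsimp only
    linarith
  refine Classical.epsilon_eq_of_forall_eq ⟨ht, hbal⟩ fun s ⟨hs0, hs⟩ => ?_
  exact hφ.injOn hs0 ht (by simp only [hs, hbal])

theorem g23Case1_mul_self (hm12 : StrictMonoOn (tildeFn f12) (Ioi 0))
    (hm13 : StrictMonoOn (tildeFn f13) (Ioi 0)) {s t : ℝ} (hs : 0 < s) (ht : 0 < t)
    (hbal : tildeFn f12 s = tildeFn f13 t) :
    g23Case1 f12 f13 (s + t) * (s + t) = tildeFn f12 s := by
  have hd : case1d12 f12 f13 (s + t) = s :=
    case1d12_eq hm12 hm13 ⟨hs, by linarith⟩ (by rwa [add_sub_cancel_left])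
  rw [g23Case1, hd, div_mul_cancel₀ _ (by positivity)]

theorem g23Case2_mul_self (hm12 : StrictMonoOn (tildeFn f12) (Ioi 0))
    (hm13 : StrictMonoOn (tildeFn f13) (Ioi 0)) {s d : ℝ} (hs : 0 < s) (hd : 0 < d)
    (hbal : tildeFn f12 s + tildeFn f13 (s + d) = 0) :
    g23Case2 f12 f13 d * d = tildeFn f13 (s + d) := by
  rw [g23Case2, case2d12_eq hm12 hm13 hd hs hbal, div_mul_cancel₀ _ hd.ne']

end BalancedDistance

theorem virtualG_neg (f12 f13 : ℝ → ℝ) (a0 a1 a2 : ℝ) :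
    virtualG f12 f13 (-a0) (-a1) (-a2) = virtualG f12 f13 a0 a1 a2 := by
  simp only [virtualG, neg_lt_neg_iff]
  congr 1
  · exact propext (by tauto)
  · congr 1
    exact propext (by tauto)

theorem virtualG_abs_mul_sub {f12 f13 : ℝ → ℝ} (hm12 : StrictMonoOn (tildeFn f12) (Ioi 0))
    (hm13 : StrictMonoOn (tildeFn f13) (Ioi 0)) {a0 a1 a2 : ℝ}
    (hne01 : a0 ≠ a1) (hne02 : a0 ≠ a2) (hne12 : a1 ≠ a2)
    (heq : f12 |a0 - a1| * (a1 - a0) + f13 |a0 - a2| * (a2 - a0) = 0) :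
    virtualG f12 f13 a0 a1 a2 |a1 - a2| * (a2 - a1) = f12 |a0 - a1| * (a0 - a1) := by
  wlog h12 : a1 < a2 generalizing a0 a1 a2
  · have key := this (a0 := -a0) (a1 := -a1) (a2 := -a2) (by simpa) (by simpa) (by simpa)
      (by simp only [← neg_sub', abs_neg]; linear_combination -heq)
      (neg_lt_neg ((not_lt.1 h12).lt_of_ne hne12.symm))
    simp only [virtualG_neg, ← neg_sub', abs_neg] at key
    linear_combination -key
  have hd : |a1 - a2| = a2 - a1 := by rw [abs_of_neg (sub_neg.2 h12), neg_sub]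
  rcases hne01.lt_or_gt with h01 | h01 <;> rcases hne02.lt_or_gt with h02 | h02
  · rw [abs_of_neg (sub_neg.2 h01), abs_of_neg (sub_neg.2 h02), neg_sub, neg_sub] at heq
    rw [hd, abs_of_neg (sub_neg.2 h01), neg_sub, virtualG,
      if_neg (by rintro (⟨_, _⟩ | ⟨_, _⟩) <;> linarith), if_pos (Or.inl ⟨h01, h12⟩)]
    have harg : a1 - a0 + (a2 - a1) = a2 - a0 := by ring
    rw [g23Case2_mul_self hm12 hm13 (sub_pos.2 h01) (sub_pos.2 h12)
      (by rw [harg]; unfold tildeFn; linear_combination heq), harg]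
    unfold tildeFn
    linear_combination heq
  · linarith
  · rw [abs_of_pos (sub_pos.2 h01), abs_of_neg (sub_neg.2 h02), neg_sub] at heq
    rw [hd, abs_of_pos (sub_pos.2 h01), virtualG, if_pos (Or.inl ⟨h01, h02⟩)]
    have harg : a0 - a1 + (a2 - a0) = a2 - a1 := by ring
    rw [← harg, g23Case1_mul_self hm12 hm13 (sub_pos.2 h01) (sub_pos.2 h02)
      (by unfold tildeFn; linear_combination -heq)]
    unfold tildeFn
    ring
  · rw [abs_of_pos (sub_pos.2 h01), abs_of_pos (sub_pos.2 h02)] at heq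
    rw [hd, abs_of_pos (sub_pos.2 h01), virtualG,
      if_neg (by rintro (⟨_, _⟩ | ⟨_, _⟩) <;> linarith),
      if_neg (by rintro (⟨_, _⟩ | ⟨_, _⟩) <;> linarith), g23Case3]
    have harg : a0 - a2 + (a2 - a1) = a0 - a1 := by ring
    rw [g23Case2_mul_self hm13 hm12 (sub_pos.2 h02) (sub_pos.2 h12)
      (by rw [harg]; unfold tildeFn; linear_combination -heq), harg]
    unfold tildeFn
    ring

theorem dist2_mk_zero (x y : ℝ) : dist2 (x, 0) (y, 0) = |x - y| := by
  simp [dist2, Real.sqrt_sq_eq_abs]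

theorem isEquilibrium_lineConfig_iff {N : ℕ} (G : SimpleGraph (Fin N))
    (f : Fin N → Fin N → ℝ → ℝ) (a : Fin N → ℝ) :
    IsEquilibrium G f (lineConfig a) ↔
      ∀ i, ∑ j, (if G.Adj i j then f i j |a i - a j| * (a j - a i) else 0) = 0 := by
  simp [IsEquilibrium, dist2_mk_zero, Prod.ext_iff, Prod.fst_sum, Prod.snd_sum,
    apply_ite Prod.fst, apply_ite Prod.snd, lineConfig]

theorem sum_ite_adj_of_neighborSet_eq_pair {V : Type*} [Fintype V] {G : SimpleGraph V}
    {i j k : V} (h : G.neighborSet i = {j, k}) (hjk : j ≠ k) (F : V → ℝ) :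
    ∑ l, (if G.Adj i l then F l else 0) = F j + F k := by
  rw [← Finset.sum_filter]
  have hfilter : Finset.univ.filter (G.Adj i) = {j, k} := by
    ext l
    simpa using Set.ext_iff.mp h l
  rw [hfilter, Finset.sum_pair hjk]

theorem reducedLaws_apply {n : ℕ} (f : Fin (n+3) → Fin (n+3) → ℝ → ℝ) (g : ℝ → ℝ)
    (i j : Fin (n+2)) (d : ℝ) :
    reducedLaws f g i j d =
      f i.succ j.succ d + if (i = 0 ∧ j = 1) ∨ (i = 1 ∧ j = 0) then g d else 0 := by
  unfold reducedLaws
  split_ifs <;> simp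

theorem ite_adj_reducedLaws_mul_eq_add {n : ℕ} {G : SimpleGraph (Fin (n+3))}
    (h12 : G.Adj 1 2) (f : Fin (n+3) → Fin (n+3) → ℝ → ℝ) (g : ℝ → ℝ) (a : Fin (n+3) → ℝ)
    (i j : Fin (n+2)) :
    (if G.Adj i.succ j.succ then reducedLaws f g i j |a i.succ - a j.succ| *
      (a j.succ - a i.succ) else 0) =
    (if G.Adj i.succ j.succ then f i.succ j.succ |a i.succ - a j.succ| *
      (a j.succ - a i.succ) else 0) +
    (if (i = 0 ∧ j = 1) ∨ (i = 1 ∧ j = 0) then g |a i.succ - a j.succ| *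
      (a j.succ - a i.succ) else 0) := by
  rw [reducedLaws_apply]
  split_ifs with hadj hij hij
  · ring
  · ring
  · rcases hij with ⟨rfl, rfl⟩ | ⟨rfl, rfl⟩
    · exact absurd h12 hadj
    · exact absurd h12.symm hadj
  · ring

theorem isEquilibrium_reducedLaws {n : ℕ} {G : SimpleGraph (Fin (n+3))}
    (h0 : G.neighborSet 0 = {1, 2}) (h12 : G.Adj 1 2)
    {f : Fin (n+3) → Fin (n+3) → ℝ → ℝ} {g : ℝ → ℝ} {a : Fin (n+3) → ℝ}
    (heq : IsEquilibrium G f (lineConfig a))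
    (hg1 : g |a 1 - a 2| * (a 2 - a 1) = f 1 0 |a 1 - a 0| * (a 0 - a 1))
    (hg2 : g |a 2 - a 1| * (a 1 - a 2) = f 2 0 |a 2 - a 0| * (a 0 - a 2)) :
    IsEquilibrium (G.comap Fin.succ) (reducedLaws f g) (lineConfig (a ∘ Fin.succ)) := by
  have hadj0 : ∀ j, G.Adj j 0 ↔ j = 1 ∨ j = 2 := fun j => by
    rw [G.adj_comm, ← SimpleGraph.mem_neighborSet, h0]
    simp
  rw [isEquilibrium_lineConfig_iff] at heq ⊢
  intro i
  have hrow := heq i.succ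
  rw [Fin.sum_univ_succ] at hrow
  have hvirt : (∑ j : Fin (n+2), if (i = 0 ∧ j = 1) ∨ (i = 1 ∧ j = 0) then
      g |a i.succ - a j.succ| * (a j.succ - a i.succ) else 0) =
      if G.Adj i.succ 0 then f i.succ 0 |a i.succ - a 0| * (a 0 - a i.succ) else 0 := by
    by_cases hi0 : i = 0
    · subst hi0
      simpa [hadj0] using hg1
    by_cases hi1 : i = 1
    · subst hi1
      simpa [hadj0] using hg2
    have hnadj : ¬ G.Adj i.succ 0 := by
      rw [hadj0, ← Fin.succ_zero_eq_one, ← Fin.succ_one_eq_two, Fin.succ_inj, Fin.succ_inj]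
      tauto
    simp [hi0, hi1, hnadj]
  simp only [SimpleGraph.comap_adj, Function.comp_apply]
  rw [Finset.sum_congr rfl fun j _ => ite_adj_reducedLaws_mul_eq_add h12 f g a i j,
    Finset.sum_add_distrib, hvirt]
  linarith

theorem statement1_general {n : ℕ} (G : SimpleGraph (Fin (n+3)))
    (h0 : G.neighborSet 0 = {1, 2}) (h12 : G.Adj 1 2)
    (f : Fin (n+3) → Fin (n+3) → ℝ → ℝ)
    (hsym : ∀ i j, f i j = f j i)
    (hF : ∀ i j, G.Adj i j → MemF (f i j))
    (a : Fin (n+3) → ℝ)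
    (hP : ∀ i j, G.Adj i j → a i ≠ a j)
    (heq : IsEquilibrium G f (lineConfig a)) :
    InConfigSpace (G.comap Fin.succ) (lineConfig (a ∘ Fin.succ)) ∧
    IsEquilibrium (G.comap Fin.succ)
      (reducedLaws f (virtualG (f 0 1) (f 0 2) (a 0) (a 1) (a 2)))
      (lineConfig (a ∘ Fin.succ)) := by
  have h01 : G.Adj 0 1 := by simp [← SimpleGraph.mem_neighborSet, h0]
  have h02 : G.Adj 0 2 := by simp [← SimpleGraph.mem_neighborSet, h0]
  have hE0 : f 0 1 |a 0 - a 1| * (a 1 - a 0) + f 0 2 |a 0 - a 2| * (a 2 - a 0) = 0 := by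
    rw [← sum_ite_adj_of_neighborSet_eq_pair h0 h12.ne fun j => f 0 j |a 0 - a j| * (a j - a 0)]
    exact (isEquilibrium_lineConfig_iff G f a).1 heq 0
  have hg := virtualG_abs_mul_sub (hF 0 1 h01).strictMonoOn_tildeFn
    (hF 0 2 h02).strictMonoOn_tildeFn (hP 0 1 h01) (hP 0 2 h02) (hP 1 2 h12) hE0
  refine ⟨fun i j hij hcol => hP _ _ hij (congrArg Prod.fst hcol),
    isEquilibrium_reducedLaws h0 h12 heq ?_ ?_⟩
  · rwa [hsym 1 0, abs_sub_comm (a 1) (a 0)]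
  · rw [abs_sub_comm, hsym 2 0, abs_sub_comm (a 2)]
    linear_combination -hg + hE0

/-- if `p` is an equilibrium line configuration on the `a`-axis of the RMA
system on a TLG whose last Henneberg vertex (index `0`, the paper's vertex 1) is adjacent
exactly to vertices `1` and `2` (the paper's 2 and 3), which are themselves adjacent, then
the sub-configuration `p* = (x₂,…,x_N)` is an equilibrium line configuration of the reduced
system associated with `p`. -/
theorem statement1 {n : ℕ} (G : SimpleGraph (Fin (n+3))) (hG : IsTLG G)
    (h0 : G.neighborSet 0 = {1, 2}) (h12 : G.Adj 1 2)
    (f : Fin (n+3) → Fin (n+3) → ℝ → ℝ)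
    (hsym : ∀ i j, f i j = f j i)
    (hF : ∀ i j, G.Adj i j → MemF (f i j))
    (a : Fin (n+3) → ℝ)
    (hP : ∀ i j, G.Adj i j → a i ≠ a j)
    (heq : IsEquilibrium G f (lineConfig a)) :
    InConfigSpace (G.comap Fin.succ) (lineConfig (a ∘ Fin.succ)) ∧
    IsEquilibrium (G.comap Fin.succ)
      (reducedLaws f (virtualG (f 0 1) (f 0 2) (a 0) (a 1) (a 2)))
      (lineConfig (a ∘ Fin.succ)) :=
  statement1_general G h0 h12 f hsym hF a hP heq
end

section
/- Let f_12, f_13 ∈ 𝓕. Then for every d > 0 there exists a unique pair (d_12, d_13) of positive real numbers with d_12 + d_13 = d and f̃_12(d_12) = f̃_13(d_13). (In particular, for every f ∈ 𝓕 one has f̃(x) → −∞ as x → 0⁺.) -/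
/-!
Each `f̃` with `f ∈ 𝓕` is strictly increasing on `ℝ₊`. It cannot stay bounded below near `0`:
a lower bound `M` would give `∫_d^1 f̃ ≥ -|M|` for all `d ∈ (0,1)`, contradicting (C2). Hence
`t ↦ f̃₁₂(t) − f̃₁₃(d − t)` increases strictly on `(0,d)` from `−∞` to `+∞`, and its unique zero
is the balanced position.
-/

open Set Filter Topology MeasureTheory Matrix Function

attribute [local instance] Classical.propDecidable

theorem MonotoneOn.tendsto_nhdsGT_atBot_of_tendsto_integral {g : ℝ → ℝ} {a b : ℝ}
    (hab : a < b) (hg : MonotoneOn g (Ioi a))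
    (hint : Tendsto (fun d => ∫ x in d..b, g x) (𝓝[>] a) atBot) :
    Tendsto g (𝓝[>] a) atBot := by
  rw [tendsto_atBot]
  intro M
  suffices ∃ x > a, g x ≤ M by
    obtain ⟨x, hax, hxM⟩ := this
    filter_upwards [Ioo_mem_nhdsGT hax] with y hy
    exact (hg hy.1 hax hy.2.le).trans hxM
  by_contra! hgM
  have hbound : ∀ d ∈ Ioo a b, -|M| * (b - a) ≤ ∫ x in d..b, g x := by
    intro d hd
    have hsub : Icc d b ⊆ Ioi a := fun x hx => hd.1.trans_le hx.1
    have hle : ∫ _ in d..b, M ≤ ∫ x in d..b, g x :=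
      intervalIntegral.integral_mono_on hd.2.le intervalIntegrable_const
        ((hg.mono (uIcc_of_le hd.2.le ▸ hsub)).intervalIntegrable)
        fun x hx => (hgM x (hsub hx)).le
    rw [intervalIntegral.integral_const, smul_eq_mul] at hle
    nlinarith [neg_abs_le M, le_abs_self M, hd.1, hd.2]
  obtain ⟨d, hd, hdb⟩ := (Filter.Eventually.and (Ioo_mem_nhdsGT hab)
    (hint.eventually (eventually_lt_atBot (-|M| * (b - a))))).exists
  exact (hbound d hd).not_gt hdb

section Balance

variable {g h : ℝ → ℝ} {d : ℝ}

theorem exists_lt_comp_sub_of_tendsto_atBot (hg : Tendsto g (𝓝[>] 0) atBot)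
    (hh : MonotoneOn h (Ioi 0)) (hd : 0 < d) : ∃ t ∈ Ioo 0 d, g t < h (d - t) := by
  have hd2 : (0 : ℝ) < d / 2 := half_pos hd
  obtain ⟨t, ht, hgt⟩ := (Filter.Eventually.and (Ioo_mem_nhdsGT hd2)
    (hg.eventually (eventually_lt_atBot (h (d / 2))))).exists
  refine ⟨t, ⟨ht.1, by linarith [ht.2]⟩, hgt.trans_le ?_⟩
  exact hh (mem_Ioi.2 hd2) (mem_Ioi.2 (by linarith [ht.2])) (by linarith [ht.2])

theorem strictMonoOn_sub_comp_sub (hg : StrictMonoOn g (Ioi 0)) (hh : StrictMonoOn h (Ioi 0)) :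
    StrictMonoOn (fun t => g t - h (d - t)) (Ioo 0 d) := by
  intro s hs t ht hst
  exact sub_lt_sub (hg hs.1 ht.1 hst)
    (hh (mem_Ioi.2 (sub_pos.2 ht.2)) (mem_Ioi.2 (sub_pos.2 hs.2)) (by linarith))

theorem existsUnique_mem_Ioo_eq_comp_sub (hg : StrictMonoOn g (Ioi 0))
    (hh : StrictMonoOn h (Ioi 0)) (hgc : ContinuousOn g (Ioi 0)) (hhc : ContinuousOn h (Ioi 0))
    (hg0 : Tendsto g (𝓝[>] 0) atBot) (hh0 : Tendsto h (𝓝[>] 0) atBot) (hd : 0 < d) :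
    ∃! t, t ∈ Ioo 0 d ∧ g t = h (d - t) := by
  set φ : ℝ → ℝ := fun t => g t - h (d - t)
  have hφc : ContinuousOn φ (Ioo 0 d) := by
    refine (hgc.mono fun t ht => ht.1).sub (hhc.comp (continuousOn_const.sub continuousOn_id) ?_)
    exact fun t ht => mem_Ioi.2 (sub_pos.2 ht.2)
  obtain ⟨s, hs, hgs⟩ := exists_lt_comp_sub_of_tendsto_atBot hg0 hh.monotoneOn hd
  obtain ⟨r, hr, hhr⟩ := exists_lt_comp_sub_of_tendsto_atBot hh0 hg.monotoneOn hd
  have hr' : d - r ∈ Ioo 0 d := ⟨sub_pos.2 hr.2, by linarith [hr.1]⟩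
  have h0 : (0 : ℝ) ∈ Icc (φ s) (φ (d - r)) :=
    ⟨by simp only [φ]; linarith, by simp only [φ, sub_sub_cancel]; linarith⟩
  obtain ⟨t, ht, hφt⟩ := hφc.surjOn_Icc hs hr' h0
  refine ⟨t, ⟨ht, sub_eq_zero.1 hφt⟩, fun u hu => ?_⟩
  have hφu : φ u = 0 := sub_eq_zero.2 hu.2
  exact (strictMonoOn_sub_comp_sub hg hh).injOn hu.1 ht (hφu.trans hφt.symm)

end Balance

theorem MemF.continuousOn_tildeFn {f : ℝ → ℝ} (hf : MemF f) : ContinuousOn (tildeFn f) (Ioi 0) :=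
  continuousOn_id.mul hf.1.continuousOn

theorem MemF.tendsto_tildeFn_nhdsGT_zero {f : ℝ → ℝ} (hf : MemF f) :
    Tendsto (tildeFn f) (𝓝[>] 0) atBot :=
  hf.strictMonoOn_tildeFn.monotoneOn.tendsto_nhdsGT_atBot_of_tendsto_integral one_pos hf.2.2.2

/-- for `f₁₂, f₁₃ ∈ 𝓕` and every `d > 0` there is a unique pair
`(d₁₂, d₁₃)` of positive reals with `d₁₂ + d₁₃ = d` and `f̃₁₂(d₁₂) = f̃₁₃(d₁₃)`;
in particular every `f ∈ 𝓕` satisfies `f̃(x) → −∞` as `x → 0⁺`. -/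
theorem statement6 (f12 f13 : ℝ → ℝ) (h12 : MemF f12) (h13 : MemF f13) :
    (∀ d > (0:ℝ), ∃! q : ℝ × ℝ, 0 < q.1 ∧ 0 < q.2 ∧ q.1 + q.2 = d ∧
        tildeFn f12 q.1 = tildeFn f13 q.2) ∧
    (∀ f : ℝ → ℝ, MemF f → Tendsto (tildeFn f) (𝓝[>] (0:ℝ)) atBot) := by
  refine ⟨fun d hd => ?_, fun f hf => hf.tendsto_tildeFn_nhdsGT_zero⟩
  obtain ⟨t, ⟨ht, hbal⟩, huniq⟩ := existsUnique_mem_Ioo_eq_comp_sub h12.strictMonoOn_tildeFn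
    h13.strictMonoOn_tildeFn h12.continuousOn_tildeFn h13.continuousOn_tildeFn
    h12.tendsto_tildeFn_nhdsGT_zero h13.tendsto_tildeFn_nhdsGT_zero hd
  refine ⟨(t, d - t), ⟨ht.1, sub_pos.2 ht.2, add_sub_cancel _ _, hbal⟩, ?_⟩
  rintro ⟨a, b⟩ ⟨ha, hb, rfl, hab⟩
  have hat : a = t := huniq a ⟨⟨ha, lt_add_of_pos_right a hb⟩, by rwa [add_sub_cancel_left]⟩
  simp [hat]
end

section
/- Let f_12, f_13 ∈ 𝓕 and let g_23 be the case-1 virtual interaction they induce. Then the map d ↦ d_12(d) is C¹ on ℝ₊, g_23 ∈ C¹(ℝ₊,ℝ), and for every d > 0, g̃′_23(d) = f̃′_12(d_12(d))·f̃′_13(d_13(d)) / (f̃′_12(d_12(d)) + f̃′_13(d_13(d))) > 0. -/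
open Set Filter Topology MeasureTheory Matrix Function

attribute [local instance] Classical.propDecidable

/-! Write `u = f̃₁₂`, `v = f̃₁₃`. Both are `C¹` and strictly increasing, and both tend to `-∞`
at `0⁺`, since a monotone function whose integral over `[d, 1]` tends to `-∞` does so itself.
Hence `t ↦ u t - v (d - t)` runs from `-∞` to `+∞` on `(0, d)` and has a zero `d₁₂(d)`.
Balancing forces both `d₁₂` and `d₁₃ = d - d₁₂` to grow with `d`, so `d₁₂` is 1-Lipschitz.
With this continuity in hand, differentiating `u (d₁₂ d) = v (d - d₁₂ d)` gives
`d₁₂′ = v′ / (u′ + v′)`, and the chain rule applied to `g̃₂₃ = u ∘ d₁₂` gives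
`g̃₂₃′ = u′ v′ / (u′ + v′)`. -/

theorem ContDiffOn.hasStrictDerivAt_of_isOpen {u : ℝ → ℝ} {s : Set ℝ} (hu : ContDiffOn ℝ 1 u s)
    (hs : IsOpen s) {x : ℝ} (hx : x ∈ s) : HasStrictDerivAt u (deriv u x) x :=
  (hu.contDiffAt (hs.mem_nhds hx)).hasStrictDerivAt one_ne_zero

theorem strictMonoOn_Ioi_of_deriv_pos {u : ℝ → ℝ} (hu : ContinuousOn u (Ioi 0))
    (hu' : ∀ x > 0, 0 < deriv u x) : StrictMonoOn u (Ioi 0) :=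
  strictMonoOn_of_deriv_pos (convex_Ioi 0) hu fun x hx => hu' x (by rwa [interior_Ioi] at hx)

theorem tendsto_atBot_of_tendsto_integral_atBot {φ : ℝ → ℝ} (hφ : MonotoneOn φ (Ioi 0))
    (h : Tendsto (fun d => ∫ x in d..1, φ x) (𝓝[>] 0) atBot) :
    Tendsto φ (𝓝[>] 0) atBot := by
  have hlower : ∀ d ∈ Ioo (0 : ℝ) 1, min (φ d) 0 ≤ ∫ x in d..1, φ x := by
    rintro d ⟨hd0, hd1⟩
    have hint : IntervalIntegrable φ volume d 1 :=
      (hφ.mono fun x hx => hd0.trans_le (uIcc_of_le hd1.le ▸ hx).1).intervalIntegrable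
    have hconst : (1 - d) * φ d ≤ ∫ x in d..1, φ x := by
      simpa using intervalIntegral.integral_mono_on hd1.le intervalIntegrable_const hint
        fun x hx => hφ hd0 (hd0.trans_le hx.1) hx.1
    rcases le_total 0 (φ d) with hφd | hφd
    · nlinarith [min_le_right (φ d) 0]
    · nlinarith [min_le_left (φ d) 0]
  rw [tendsto_atBot]
  intro M
  filter_upwards [h.eventually (eventually_lt_atBot (min M 0)), Ioo_mem_nhdsGT one_pos]
    with d hd hd'
  rcases min_lt_iff.1 ((hlower d hd').trans_lt hd) with hlt | hlt
  · exact (hlt.trans_le (min_le_left M 0)).le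
  · linarith [min_le_right M 0]

/-- With `u = f̃₁₂`, `v = f̃₁₃` this is the condition on `d₁₂ = t`, `d₁₃ = d - t` that
`case1d12` chooses from. -/
def IsBalancedSplit (u v : ℝ → ℝ) (d t : ℝ) : Prop :=
  0 < t ∧ t < d ∧ u t = v (d - t)

section BalancedSplit

variable {u v T : ℝ → ℝ}

theorem IsBalancedSplit.le_iff_le (hu : StrictMonoOn u (Ioi 0)) (hv : StrictMonoOn v (Ioi 0))
    {d d' t t' : ℝ} (h : IsBalancedSplit u v d t) (h' : IsBalancedSplit u v d' t') :
    t ≤ t' ↔ d - t ≤ d' - t' := by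
  rw [← hu.le_iff_le h.1 h'.1, h.2.2, h'.2.2,
    hv.le_iff_le (sub_pos.2 h.2.1) (sub_pos.2 h'.2.1)]

theorem IsBalancedSplit.abs_sub_le (hu : StrictMonoOn u (Ioi 0)) (hv : StrictMonoOn v (Ioi 0))
    {d d' t t' : ℝ} (h : IsBalancedSplit u v d t) (h' : IsBalancedSplit u v d' t') :
    |t - t'| ≤ |d - d'| := by
  have := le_abs_self (d - d')
  have := neg_abs_le (d - d')
  rcases le_total t t' with htt' | htt'
  · have := (h.le_iff_le hu hv h').1 htt'
    rw [abs_of_nonpos (by linarith)]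
    linarith
  · have := (h'.le_iff_le hu hv h).1 htt'
    rw [abs_of_nonneg (by linarith)]
    linarith

theorem exists_isBalancedSplit (hu : ContinuousOn u (Ioi 0)) (hv : ContinuousOn v (Ioi 0))
    (hu_bot : Tendsto u (𝓝[>] 0) atBot) (hv_bot : Tendsto v (𝓝[>] 0) atBot)
    {d : ℝ} (hd : 0 < d) : ∃ t, IsBalancedSplit u v d t := by
  have hcont : ContinuousOn (fun t => u t - v (d - t)) (Ioo 0 d) :=
    (hu.mono Ioo_subset_Ioi_self).sub <| hv.comp (continuousOn_const.sub continuousOn_id)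
      fun t ht => sub_pos.2 ht.2
  have hv_d : Tendsto (fun t => v (d - t)) (𝓝[>] 0) (𝓝 (v d)) :=
    ((hv.continuousAt (Ioi_mem_nhds hd)).tendsto.comp
      ((continuous_sub_left d).tendsto' 0 d (sub_zero d))).mono_left nhdsWithin_le_nhds
  have hflip : Tendsto (fun t => d - t) (𝓝[<] d) (𝓝[>] 0) :=
    tendsto_nhdsWithin_iff.2 ⟨((continuous_sub_left d).tendsto' d 0 (sub_self d)).mono_left
      nhdsWithin_le_nhds, eventually_nhdsWithin_of_forall fun t ht => sub_pos.2 (mem_Iio.1 ht)⟩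
  have hu_d : Tendsto u (𝓝[<] d) (𝓝 (u d)) :=
    (hu.continuousAt (Ioi_mem_nhds hd)).tendsto.mono_left nhdsWithin_le_nhds
  have hbot : Tendsto (fun t : Ioo 0 d => u t - v (d - t)) atBot atBot := by
    refine (tendsto_comp_coe_Ioo_atBot hd (f := fun t => u t - v (d - t))).2 ?_
    exact hu_bot.atBot_add hv_d.neg
  have htop : Tendsto (fun t : Ioo 0 d => u t - v (d - t)) atTop atTop := by
    refine (tendsto_comp_coe_Ioo_atTop hd (f := fun t => u t - v (d - t))).2 ?_
    exact hu_d.add_atTop (tendsto_neg_atBot_atTop.comp (hv_bot.comp hflip))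
  obtain ⟨t, ht, hzero⟩ := hcont.surjOn_of_tendsto (nonempty_Ioo.2 hd) hbot htop (mem_univ 0)
  exact ⟨t, ht.1, ht.2, sub_eq_zero.1 hzero⟩

theorem lipschitzOnWith_of_isBalancedSplit (hu : StrictMonoOn u (Ioi 0))
    (hv : StrictMonoOn v (Ioi 0)) (hT : ∀ d > 0, IsBalancedSplit u v d (T d)) :
    LipschitzOnWith 1 T (Ioi 0) :=
  LipschitzOnWith.mk_one fun d hd d' hd' => by
    simpa only [Real.dist_eq] using (hT d hd).abs_sub_le hu hv (hT d' hd')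

/-- Near `T d`, the split point is recovered from `t ↦ t + v⁻¹ (u t)`, a local left inverse of
`T`, with `v⁻¹` the local inverse of `v` at `d - T d`. -/
theorem hasDerivAt_of_isBalancedSplit (hT : ∀ d > 0, IsBalancedSplit u v d (T d)) {d A B : ℝ}
    (hd : 0 < d) (hTd : ContinuousAt T d) (hu : HasDerivAt u A (T d))
    (hv : HasStrictDerivAt v B (d - T d)) (hB : B ≠ 0) (hAB : A + B ≠ 0) :
    HasDerivAt T (B / (A + B)) d := by
  obtain ⟨w, hw, hwv⟩ : ∃ w : ℝ → ℝ,
      HasDerivAt w B⁻¹ (v (d - T d)) ∧ ∀ᶠ s in 𝓝 (d - T d), w (v s) = s :=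
    ⟨_, (hv.to_localInverse hB).hasDerivAt, hv.eventually_left_inverse hB⟩
  rw [← (hT d hd).2.2] at hw
  have hψ : HasDerivAt (fun t => t + w (u t)) (1 + B⁻¹ * A) (T d) :=
    (hasDerivAt_id _).add (hw.comp (T d) hu)
  have hleft : ∀ᶠ x in 𝓝 d, T x + w (u (T x)) = x := by
    have hsub : Tendsto (fun x => x - T x) (𝓝 d) (𝓝 (d - T d)) := tendsto_id.sub hTd
    filter_upwards [hsub.eventually hwv, Ioi_mem_nhds hd] with x hx hx0
    rw [(hT x hx0).2.2, hx]
    ring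
  have hslope : 1 + B⁻¹ * A = (A + B) / B := by rw [inv_mul_eq_div, one_add_div hB, add_comm]
  rw [hslope] at hψ
  simpa only [inv_div] using HasDerivAt.of_local_left_inverse hTd hψ (div_ne_zero hAB hB) hleft

section ContDiff

variable (hu : ContDiffOn ℝ 1 u (Ioi 0)) (hv : ContDiffOn ℝ 1 v (Ioi 0))
  (hu' : ∀ x > 0, 0 < deriv u x) (hv' : ∀ x > 0, 0 < deriv v x)
  (hT : ∀ d > 0, IsBalancedSplit u v d (T d))
include hu hv hu' hv' hT

theorem hasDerivAt_of_isBalancedSplit_of_contDiffOn {d : ℝ} (hd : 0 < d) :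
    HasDerivAt T (deriv v (d - T d) / (deriv u (T d) + deriv v (d - T d))) d := by
  have hsplit := hT d hd
  have hTd : ContinuousAt T d :=
    ((lipschitzOnWith_of_isBalancedSplit (strictMonoOn_Ioi_of_deriv_pos hu.continuousOn hu')
      (strictMonoOn_Ioi_of_deriv_pos hv.continuousOn hv') hT).continuousOn).continuousAt
      (Ioi_mem_nhds hd)
  have hB := hv' _ (sub_pos.2 hsplit.2.1)
  exact hasDerivAt_of_isBalancedSplit hT hd hTd
    (hu.hasStrictDerivAt_of_isOpen isOpen_Ioi hsplit.1).hasDerivAt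
    (hv.hasStrictDerivAt_of_isOpen isOpen_Ioi (sub_pos.2 hsplit.2.1)) hB.ne'
    (add_pos (hu' _ hsplit.1) hB).ne'

theorem contDiffOn_of_isBalancedSplit : ContDiffOn ℝ 1 T (Ioi 0) := by
  have hderiv : ∀ d ∈ Ioi (0 : ℝ), HasDerivAt T _ d := fun d hd =>
    hasDerivAt_of_isBalancedSplit_of_contDiffOn hu hv hu' hv' hT hd
  have hT_cont : ContinuousOn T (Ioi 0) := fun d hd =>
    (hderiv d hd).continuousAt.continuousWithinAt
  rw [show (1 : WithTop ℕ∞) = 0 + 1 from rfl, contDiffOn_succ_iff_deriv_of_isOpen isOpen_Ioi]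
  refine ⟨fun d hd => (hderiv d hd).differentiableAt.differentiableWithinAt, by simp, ?_⟩
  have hA : ContinuousOn (fun d => deriv u (T d)) (Ioi 0) :=
    (hu.continuousOn_deriv_of_isOpen isOpen_Ioi le_rfl).comp hT_cont fun d hd => (hT d hd).1
  have hB : ContinuousOn (fun d => deriv v (d - T d)) (Ioi 0) :=
    (hv.continuousOn_deriv_of_isOpen isOpen_Ioi le_rfl).comp (continuousOn_id.sub hT_cont)
      fun d hd => sub_pos.2 (hT d hd).2.1
  refine contDiffOn_zero.2 <| (hB.div (hA.add hB) fun d hd => ?_).congr fun d hd =>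
    (hderiv d hd).deriv
  exact (add_pos (hu' _ (hT d hd).1) (hv' _ (sub_pos.2 (hT d hd).2.1))).ne'

end ContDiff

end BalancedSplit

namespace MemF

variable {f : ℝ → ℝ} (hf : MemF f)
include hf

theorem contDiffOn_tildeFn : ContDiffOn ℝ 1 (tildeFn f) (Ioi 0) :=
  contDiffOn_id.mul hf.1

theorem tendsto_tildeFn_atBot : Tendsto (tildeFn f) (𝓝[>] 0) atBot :=
  tendsto_atBot_of_tendsto_integral_atBot
    (strictMonoOn_Ioi_of_deriv_pos hf.contDiffOn_tildeFn.continuousOn hf.2.1).monotoneOn hf.2.2.2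

end MemF

theorem isBalancedSplit_case1d12 {f12 f13 : ℝ → ℝ} (h12 : MemF f12) (h13 : MemF f13) :
    ∀ d > 0, IsBalancedSplit (tildeFn f12) (tildeFn f13) d (case1d12 f12 f13 d) := fun _ hd =>
  Classical.epsilon_spec <| exists_isBalancedSplit h12.contDiffOn_tildeFn.continuousOn
    h13.contDiffOn_tildeFn.continuousOn h12.tendsto_tildeFn_atBot h13.tendsto_tildeFn_atBot hd

theorem tildeFn_g23Case1 (f12 f13 : ℝ → ℝ) {d : ℝ} (hd : d ≠ 0) :
    tildeFn (g23Case1 f12 f13) d = tildeFn f12 (case1d12 f12 f13 d) :=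
  mul_div_cancel₀ _ hd

/-- for the case-1 virtual interaction `g₂₃` induced by `f₁₂, f₁₃ ∈ 𝓕`,
the balanced-distance map `d ↦ d₁₂(d)` is `C¹` on `ℝ₊`, `g₂₃ ∈ C¹(ℝ₊,ℝ)`, and
`g̃′₂₃(d) = f̃′₁₂(d₁₂)f̃′₁₃(d₁₃)/(f̃′₁₂(d₁₂)+f̃′₁₃(d₁₃)) > 0` with `d₁₃(d) = d − d₁₂(d)`. -/
theorem statement7 (f12 f13 : ℝ → ℝ) (h12 : MemF f12) (h13 : MemF f13) :
    ContDiffOn ℝ 1 (case1d12 f12 f13) (Set.Ioi 0) ∧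
    ContDiffOn ℝ 1 (g23Case1 f12 f13) (Set.Ioi 0) ∧
    ∀ d > (0:ℝ),
      deriv (tildeFn (g23Case1 f12 f13)) d
        = deriv (tildeFn f12) (case1d12 f12 f13 d)
            * deriv (tildeFn f13) (d - case1d12 f12 f13 d)
          / (deriv (tildeFn f12) (case1d12 f12 f13 d)
             + deriv (tildeFn f13) (d - case1d12 f12 f13 d)) ∧
      0 < deriv (tildeFn (g23Case1 f12 f13)) d := by
  have hT := isBalancedSplit_case1d12 h12 h13
  have hT_C1 := contDiffOn_of_isBalancedSplit h12.contDiffOn_tildeFn h13.contDiffOn_tildeFn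
    h12.2.1 h13.2.1 hT
  refine ⟨hT_C1, (h12.contDiffOn_tildeFn.comp hT_C1 fun d hd => (hT d hd).1).div contDiffOn_id
    fun d hd => ne_of_gt hd, fun d hd => ?_⟩
  have hA := h12.2.1 _ (hT d hd).1
  have hB := h13.2.1 _ (sub_pos.2 (hT d hd).2.1)
  have hd12 := hasDerivAt_of_isBalancedSplit_of_contDiffOn h12.contDiffOn_tildeFn
    h13.contDiffOn_tildeFn h12.2.1 h13.2.1 hT hd
  have hg := ((h12.contDiffOn_tildeFn.hasStrictDerivAt_of_isOpen isOpen_Ioi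
    (hT d hd).1).hasDerivAt.comp d hd12).congr_of_eventuallyEq
      ((eventually_ne_nhds hd.ne').mono fun x hx => tildeFn_g23Case1 f12 f13 hx)
  rw [hg.deriv, mul_div_assoc]
  exact ⟨rfl, by positivity⟩
end

section
/- Let f_12, f_13 ∈ 𝓕 and let g_23 be the case-2 virtual interaction they induce. Then there is a unique d_0 > 0 with f̃_12(d_0) + f̃_13(d_0) = 0, and lim_{d→0⁺} g̃_23(d) = f̃_13(d_0), which is finite; moreover g̃′_23(d) = f̃′_12(d_12(d))·f̃′_13(d_13(d)) / (f̃′_12(d_12(d)) + f̃′_13(d_13(d))) > 0 for every d > 0. -/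
open Set Filter Topology MeasureTheory Matrix Function

attribute [local instance] Classical.propDecidable

namespace Statement10Aux

lemma memF_hasDerivAt {f : ℝ → ℝ} (hf : MemF f) {t : ℝ} (ht : 0 < t) :
    HasDerivAt (tildeFn f) (deriv (tildeFn f) t) t :=
  (differentiableAt_of_deriv_ne_zero (ne_of_gt (hf.2.1 t ht))).hasDerivAt

lemma memF_contOn {f : ℝ → ℝ} (hf : MemF f) : ContinuousOn (tildeFn f) (Set.Ioi 0) :=
  fun t ht => (memF_hasDerivAt hf ht).continuousAt.continuousWithinAt

lemma memF_mono {f : ℝ → ℝ} (hf : MemF f) : StrictMonoOn (tildeFn f) (Set.Ioi 0) :=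
  strictMonoOn_of_deriv_pos (convex_Ioi 0) (memF_contOn hf)
    (fun x hx => hf.2.1 x (by simpa [interior_Ioi] using hx))

lemma memF_small {f : ℝ → ℝ} (hf : MemF f) (M : ℝ) : ∃ t > (0:ℝ), tildeFn f t < M := by
  by_contra h
  push_neg at h
  have hev : ∀ᶠ d in 𝓝[>] (0:ℝ), (∫ x in d..(1:ℝ), tildeFn f x) < -|M| - 1 :=
    hf.2.2.2.eventually (eventually_lt_atBot _)
  have hev2 : ∀ᶠ d in 𝓝[>] (0:ℝ), d ∈ Set.Iio (1:ℝ) :=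
    mem_nhdsWithin_of_mem_nhds (Iio_mem_nhds one_pos)
  have hev3 : ∀ᶠ d in 𝓝[>] (0:ℝ), d ∈ Set.Ioi (0:ℝ) := eventually_mem_nhdsWithin
  obtain ⟨d, hdint, hd1, hd0⟩ := (hev.and (hev2.and hev3)).exists
  have hd0' : (0:ℝ) < d := hd0
  have hd1' : d < 1 := hd1
  have hIcc : Set.Icc d 1 ⊆ Set.Ioi 0 := fun x hx => lt_of_lt_of_le hd0' hx.1
  have hint : IntervalIntegrable (tildeFn f) MeasureTheory.volume d 1 :=
    ContinuousOn.intervalIntegrable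
      (by rw [Set.uIcc_of_le hd1'.le]; exact (memF_contOn hf).mono hIcc)
  have hmono := intervalIntegral.integral_mono_on (μ := MeasureTheory.volume) hd1'.le
      intervalIntegrable_const hint (fun x hx => h x (hIcc hx))
  rw [intervalIntegral.integral_const] at hmono
  simp only [smul_eq_mul] at hmono
  nlinarith [mul_nonneg (by linarith : (0:ℝ) ≤ 1 - d)
    (by linarith [neg_abs_le M] : (0:ℝ) ≤ M + |M|), abs_nonneg M]

variable {f12 f13 : ℝ → ℝ}

lemma exists_root (h12 : MemF f12) (h13 : MemF f13)
    {d0 : ℝ} (hd0 : 0 < d0) (heq0 : tildeFn f12 d0 + tildeFn f13 d0 = 0)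
    {d : ℝ} (hd : 0 ≤ d) :
    ∃ t, 0 < t ∧ tildeFn f12 t + tildeFn f13 (t + d) = 0 := by
  obtain ⟨t0, ht0, ht0M⟩ := memF_small h12 (-(tildeFn f13 (d0 + d)))
  set t1 := min t0 d0 with ht1def
  have ht1 : 0 < t1 := lt_min ht0 hd0
  have ht1le : t1 ≤ d0 := min_le_right _ _
  have hG1 : tildeFn f12 t1 + tildeFn f13 (t1 + d) < 0 := by
    have h1 : tildeFn f12 t1 ≤ tildeFn f12 t0 :=
      (memF_mono h12).monotoneOn (Set.mem_Ioi.mpr ht1) (Set.mem_Ioi.mpr ht0) (min_le_left _ _)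
    have h2 : tildeFn f13 (t1 + d) ≤ tildeFn f13 (d0 + d) :=
      (memF_mono h13).monotoneOn (Set.mem_Ioi.mpr (by linarith)) (Set.mem_Ioi.mpr (by linarith))
        (by linarith)
    linarith
  have hG2 : 0 ≤ tildeFn f12 d0 + tildeFn f13 (d0 + d) := by
    have h2 : tildeFn f13 d0 ≤ tildeFn f13 (d0 + d) :=
      (memF_mono h13).monotoneOn (Set.mem_Ioi.mpr hd0) (Set.mem_Ioi.mpr (by linarith))
        (by linarith)
    linarith
  have hsub : Set.Icc t1 d0 ⊆ Set.Ioi 0 := fun x hx => lt_of_lt_of_le ht1 hx.1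
  have hcont : ContinuousOn (fun t => tildeFn f12 t + tildeFn f13 (t + d)) (Set.Icc t1 d0) := by
    apply ContinuousOn.add
    · exact (memF_contOn h12).mono hsub
    · refine (memF_contOn h13).comp (Continuous.continuousOn (by continuity)) ?_
      intro x hx
      have hx1 : (0:ℝ) < x := lt_of_lt_of_le ht1 hx.1
      simp only [Set.mem_Ioi]
      linarith
  obtain ⟨t, htmem, htval⟩ := intermediate_value_Icc ht1le hcont ⟨hG1.le, hG2⟩
  exact ⟨t, lt_of_lt_of_le ht1 htmem.1, htval⟩

lemma sum_mono (h12 : MemF f12) (h13 : MemF f13) {d : ℝ} (hd : 0 ≤ d) :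
    StrictMonoOn (fun t => tildeFn f12 t + tildeFn f13 (t + d)) (Set.Ioi 0) := by
  intro x hx y hy hxy
  have hx' : (0:ℝ) < x := hx
  have hy' : (0:ℝ) < y := hy
  exact add_lt_add (memF_mono h12 hx hy hxy)
    (memF_mono h13 (Set.mem_Ioi.mpr (by linarith)) (Set.mem_Ioi.mpr (by linarith)) (by linarith))

lemma d12_spec (h12 : MemF f12) (h13 : MemF f13)
    {d0 : ℝ} (hd0 : 0 < d0) (heq0 : tildeFn f12 d0 + tildeFn f13 d0 = 0)
    {d : ℝ} (hd : 0 ≤ d) :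
    0 < case2d12 f12 f13 d ∧
      tildeFn f12 (case2d12 f12 f13 d) + tildeFn f13 (case2d12 f12 f13 d + d) = 0 := by
  unfold case2d12
  exact Classical.epsilon_spec (exists_root h12 h13 hd0 heq0 hd)

lemma d12_lt (h12 : MemF f12) (h13 : MemF f13)
    {d0 : ℝ} (hd0 : 0 < d0) (heq0 : tildeFn f12 d0 + tildeFn f13 d0 = 0)
    {d : ℝ} (hd : 0 < d) : case2d12 f12 f13 d < d0 := by
  obtain ⟨hu, heq⟩ := d12_spec h12 h13 hd0 heq0 hd.le
  by_contra hc
  push_neg at hc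
  have h1 : tildeFn f12 d0 ≤ tildeFn f12 (case2d12 f12 f13 d) :=
    (memF_mono h12).monotoneOn (Set.mem_Ioi.mpr hd0) (Set.mem_Ioi.mpr hu) hc
  have h2 : tildeFn f13 d0 < tildeFn f13 (case2d12 f12 f13 d + d) :=
    memF_mono h13 (Set.mem_Ioi.mpr hd0) (Set.mem_Ioi.mpr (by linarith)) (by linarith)
  linarith

lemma d13_gt (h12 : MemF f12) (h13 : MemF f13)
    {d0 : ℝ} (hd0 : 0 < d0) (heq0 : tildeFn f12 d0 + tildeFn f13 d0 = 0)
    {d : ℝ} (hd : 0 < d) : d0 < case2d12 f12 f13 d + d := by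
  obtain ⟨hu, heq⟩ := d12_spec h12 h13 hd0 heq0 hd.le
  have hlt := d12_lt h12 h13 hd0 heq0 hd
  by_contra hc
  push_neg at hc
  have h1 : tildeFn f12 (case2d12 f12 f13 d) < tildeFn f12 d0 :=
    memF_mono h12 (Set.mem_Ioi.mpr hu) (Set.mem_Ioi.mpr hd0) hlt
  have h2 : tildeFn f13 (case2d12 f12 f13 d + d) ≤ tildeFn f13 d0 :=
    (memF_mono h13).monotoneOn (Set.mem_Ioi.mpr (by linarith)) (Set.mem_Ioi.mpr hd0) hc
  linarith

lemma d12_anti (h12 : MemF f12) (h13 : MemF f13)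
    {d0 : ℝ} (hd0 : 0 < d0) (heq0 : tildeFn f12 d0 + tildeFn f13 d0 = 0)
    {d d' : ℝ} (hd : 0 < d) (hdd : d < d') :
    case2d12 f12 f13 d' < case2d12 f12 f13 d := by
  obtain ⟨hu, heq⟩ := d12_spec h12 h13 hd0 heq0 hd.le
  obtain ⟨hu', heq'⟩ := d12_spec h12 h13 hd0 heq0 (by linarith : (0:ℝ) ≤ d')
  by_contra hc
  push_neg at hc
  have h1 : tildeFn f12 (case2d12 f12 f13 d) ≤ tildeFn f12 (case2d12 f12 f13 d') :=
    (memF_mono h12).monotoneOn (Set.mem_Ioi.mpr hu) (Set.mem_Ioi.mpr hu') hc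
  have h2 : tildeFn f13 (case2d12 f12 f13 d + d) < tildeFn f13 (case2d12 f12 f13 d' + d') :=
    memF_mono h13 (Set.mem_Ioi.mpr (by linarith)) (Set.mem_Ioi.mpr (by linarith)) (by linarith)
  linarith

lemma d13_mono (h12 : MemF f12) (h13 : MemF f13)
    {d0 : ℝ} (hd0 : 0 < d0) (heq0 : tildeFn f12 d0 + tildeFn f13 d0 = 0)
    {d d' : ℝ} (hd : 0 < d) (hdd : d < d') :
    case2d12 f12 f13 d + d < case2d12 f12 f13 d' + d' := by
  obtain ⟨hu, heq⟩ := d12_spec h12 h13 hd0 heq0 hd.le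
  obtain ⟨hu', heq'⟩ := d12_spec h12 h13 hd0 heq0 (by linarith : (0:ℝ) ≤ d')
  have hanti := d12_anti h12 h13 hd0 heq0 hd hdd
  by_contra hc
  push_neg at hc
  have h1 : tildeFn f12 (case2d12 f12 f13 d') < tildeFn f12 (case2d12 f12 f13 d) :=
    memF_mono h12 (Set.mem_Ioi.mpr hu') (Set.mem_Ioi.mpr hu) hanti
  have h2 : tildeFn f13 (case2d12 f12 f13 d' + d') ≤ tildeFn f13 (case2d12 f12 f13 d + d) :=
    (memF_mono h13).monotoneOn (Set.mem_Ioi.mpr (by linarith)) (Set.mem_Ioi.mpr (by linarith)) hc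
  linarith

lemma d12_lip (h12 : MemF f12) (h13 : MemF f13)
    {d0 : ℝ} (hd0 : 0 < d0) (heq0 : tildeFn f12 d0 + tildeFn f13 d0 = 0)
    {x y : ℝ} (hx : 0 < x) (hy : 0 < y) :
    |case2d12 f12 f13 x - case2d12 f12 f13 y| ≤ |x - y| := by
  rcases lt_trichotomy x y with h | h | h
  · have h1 := d12_anti h12 h13 hd0 heq0 hx h
    have h2 := d13_mono h12 h13 hd0 heq0 hx h
    rw [abs_of_neg (by linarith : x - y < 0),
      abs_of_pos (by linarith : 0 < case2d12 f12 f13 x - case2d12 f12 f13 y)]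
    linarith
  · simp [h]
  · have h1 := d12_anti h12 h13 hd0 heq0 hy h
    have h2 := d13_mono h12 h13 hd0 heq0 hy h
    rw [abs_of_pos (by linarith : 0 < x - y),
      abs_of_neg (by linarith : case2d12 f12 f13 x - case2d12 f12 f13 y < 0)]
    linarith

lemma d12_contAt (h12 : MemF f12) (h13 : MemF f13)
    {d0 : ℝ} (hd0 : 0 < d0) (heq0 : tildeFn f12 d0 + tildeFn f13 d0 = 0)
    {d : ℝ} (hd : 0 < d) : ContinuousAt (case2d12 f12 f13) d := by
  rw [Metric.continuousAt_iff]
  intro ε hε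
  refine ⟨min ε d, lt_min hε hd, ?_⟩
  intro y hy
  rw [Real.dist_eq] at hy ⊢
  have hy0 : 0 < y := by
    have h1 := abs_lt.mp (lt_of_lt_of_le hy (min_le_right _ _))
    linarith [h1.1]
  exact lt_of_le_of_lt (d12_lip h12 h13 hd0 heq0 hy0 hd)
    (lt_of_lt_of_le hy (min_le_left _ _))

noncomputable def invT (f : ℝ → ℝ) : ℝ → ℝ :=
  fun y => Classical.epsilon fun t => 0 < t ∧ tildeFn f t = y

lemma invT_spec {f : ℝ → ℝ} (hf : MemF f) {a b y : ℝ} (ha : 0 < a) (hab : a ≤ b)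
    (hy : y ∈ Set.Icc (tildeFn f a) (tildeFn f b)) :
    0 < invT f y ∧ tildeFn f (invT f y) = y := by
  have hsub : Set.Icc a b ⊆ Set.Ioi 0 := fun x hx => lt_of_lt_of_le ha hx.1
  obtain ⟨t, htmem, hty⟩ := intermediate_value_Icc hab ((memF_contOn hf).mono hsub) hy
  have hex : ∃ r, 0 < r ∧ tildeFn f r = y := ⟨t, lt_of_lt_of_le ha htmem.1, hty⟩
  unfold invT
  exact Classical.epsilon_spec hex

lemma invT_eq {f : ℝ → ℝ} (hf : MemF f) {t : ℝ} (ht : 0 < t) : invT f (tildeFn f t) = t := by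
  have h := invT_spec hf ht le_rfl (Set.mem_Icc.mpr ⟨le_rfl, le_rfl⟩)
  exact (memF_mono hf).injOn (Set.mem_Ioi.mpr h.1) (Set.mem_Ioi.mpr ht) h.2

lemma invT_contAt {f : ℝ → ℝ} (hf : MemF f) {t : ℝ} (ht : 0 < t) :
    ContinuousAt (invT f) (tildeFn f t) := by
  rw [Metric.continuousAt_iff]
  intro ε hε
  set ε' := min ε (t / 2) with hε'def
  have hε'pos : 0 < ε' := lt_min hε (by linarith)
  have hε't : ε' ≤ t / 2 := min_le_right _ _
  have hε'ε : ε' ≤ ε := min_le_left _ _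
  have h1 : 0 < t - ε' := by linarith
  have hlt1 : tildeFn f (t - ε') < tildeFn f t :=
    memF_mono hf (Set.mem_Ioi.mpr h1) (Set.mem_Ioi.mpr ht) (by linarith)
  have hlt2 : tildeFn f t < tildeFn f (t + ε') :=
    memF_mono hf (Set.mem_Ioi.mpr ht) (Set.mem_Ioi.mpr (by linarith)) (by linarith)
  obtain ⟨δ, hδ, hball⟩ := Metric.mem_nhds_iff.mp
    (isOpen_Ioo.mem_nhds (Set.mem_Ioo.mpr ⟨hlt1, hlt2⟩))
  refine ⟨δ, hδ, ?_⟩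
  intro y hy
  have hyI : y ∈ Set.Ioo (tildeFn f (t - ε')) (tildeFn f (t + ε')) :=
    hball (Metric.mem_ball.mpr hy)
  have hspec := invT_spec hf h1 (by linarith : t - ε' ≤ t + ε') ⟨hyI.1.le, hyI.2.le⟩
  have hlow : t - ε' < invT f y := by
    by_contra hc
    push_neg at hc
    have := (memF_mono hf).monotoneOn (Set.mem_Ioi.mpr hspec.1) (Set.mem_Ioi.mpr h1) hc
    rw [hspec.2] at this
    exact absurd hyI.1 (not_lt.mpr this)
  have hhigh : invT f y < t + ε' := by
    by_contra hc
    push_neg at hc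
    have := (memF_mono hf).monotoneOn (Set.mem_Ioi.mpr (by linarith : (0:ℝ) < t + ε'))
      (Set.mem_Ioi.mpr hspec.1) hc
    rw [hspec.2] at this
    exact absurd hyI.2 (not_lt.mpr this)
  rw [Real.dist_eq, invT_eq hf ht, abs_lt]
  constructor <;> linarith

lemma invT_hasDerivAt {f : ℝ → ℝ} (hf : MemF f) {t : ℝ} (ht : 0 < t) :
    HasDerivAt (invT f) (deriv (tildeFn f) t)⁻¹ (tildeFn f t) := by
  have heq : invT f (tildeFn f t) = t := invT_eq hf ht
  apply HasDerivAt.of_local_left_inverse (invT_contAt hf ht)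
    (by rw [heq]; exact memF_hasDerivAt hf ht) (ne_of_gt (hf.2.1 t ht))
  have hmem : tildeFn f t ∈ Set.Ioo (tildeFn f (t / 2)) (tildeFn f (2 * t)) :=
    ⟨memF_mono hf (Set.mem_Ioi.mpr (by linarith)) (Set.mem_Ioi.mpr ht) (by linarith),
     memF_mono hf (Set.mem_Ioi.mpr ht) (Set.mem_Ioi.mpr (by linarith)) (by linarith)⟩
  filter_upwards [isOpen_Ioo.mem_nhds hmem] with y hy
  exact (invT_spec hf (by linarith : (0:ℝ) < t / 2) (by linarith) ⟨hy.1.le, hy.2.le⟩).2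

end Statement10Aux

/-- for the case-2 virtual interaction `g₂₃` induced by `f₁₂, f₁₃ ∈ 𝓕`,
there is a unique `d₀ > 0` with `f̃₁₂(d₀) + f̃₁₃(d₀) = 0`, `g̃₂₃(d) → f̃₁₃(d₀)` (a finite
limit) as `d → 0⁺`, and `g̃′₂₃(d) = f̃′₁₂(d₁₂)f̃′₁₃(d₁₃)/(f̃′₁₂(d₁₂)+f̃′₁₃(d₁₃)) > 0`
for all `d > 0`, where `d₁₂ = d₁₂(d)` and `d₁₃ = d₁₂(d) + d`. -/


theorem statement10 (f12 f13 : ℝ → ℝ) (h12 : MemF f12) (h13 : MemF f13) :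
    ∃ d0 : ℝ, 0 < d0 ∧ tildeFn f12 d0 + tildeFn f13 d0 = 0 ∧
      (∀ d' : ℝ, 0 < d' → tildeFn f12 d' + tildeFn f13 d' = 0 → d' = d0) ∧
      Tendsto (tildeFn (g23Case2 f12 f13)) (𝓝[>] (0:ℝ)) (𝓝 (tildeFn f13 d0)) ∧
      ∀ d > (0:ℝ),
        deriv (tildeFn (g23Case2 f12 f13)) d
          = deriv (tildeFn f12) (case2d12 f12 f13 d)
              * deriv (tildeFn f13) (case2d12 f12 f13 d + d)
            / (deriv (tildeFn f12) (case2d12 f12 f13 d)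
               + deriv (tildeFn f13) (case2d12 f12 f13 d + d)) ∧
        0 < deriv (tildeFn (g23Case2 f12 f13)) d := by
  classical
  open Statement10Aux in
  obtain ⟨z12, hz12pos, hz12⟩ := h12.2.2.1
  obtain ⟨z13, hz13pos, hz13⟩ := h13.2.2.1
  set m := min z12 z13 with hm_def
  set Mx := max z12 z13 with hMx_def
  have hm : 0 < m := lt_min hz12pos hz13pos
  have hMx : 0 < Mx := lt_of_lt_of_le hm (min_le_max)
  have hmM : m ≤ Mx := min_le_max
  have hFm : tildeFn f12 m + tildeFn f13 m ≤ 0 := by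
    have h1 : tildeFn f12 m ≤ tildeFn f12 z12 :=
      (memF_mono h12).monotoneOn (Set.mem_Ioi.mpr hm) (Set.mem_Ioi.mpr hz12pos)
        (min_le_left _ _)
    have h2 : tildeFn f13 m ≤ tildeFn f13 z13 :=
      (memF_mono h13).monotoneOn (Set.mem_Ioi.mpr hm) (Set.mem_Ioi.mpr hz13pos)
        (min_le_right _ _)
    rw [hz12] at h1; rw [hz13] at h2; linarith
  have hFM : 0 ≤ tildeFn f12 Mx + tildeFn f13 Mx := by
    have h1 : tildeFn f12 z12 ≤ tildeFn f12 Mx :=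
      (memF_mono h12).monotoneOn (Set.mem_Ioi.mpr hz12pos) (Set.mem_Ioi.mpr hMx)
        (le_max_left _ _)
    have h2 : tildeFn f13 z13 ≤ tildeFn f13 Mx :=
      (memF_mono h13).monotoneOn (Set.mem_Ioi.mpr hz13pos) (Set.mem_Ioi.mpr hMx)
        (le_max_right _ _)
    rw [hz12] at h1; rw [hz13] at h2; linarith
  have hsubmM : Set.Icc m Mx ⊆ Set.Ioi 0 := fun x hx => lt_of_lt_of_le hm hx.1
  have hcontF : ContinuousOn (fun t => tildeFn f12 t + tildeFn f13 t) (Set.Icc m Mx) :=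
    ((memF_contOn h12).mono hsubmM).add ((memF_contOn h13).mono hsubmM)
  obtain ⟨d0, hd0mem, hd0eq⟩ := intermediate_value_Icc hmM hcontF ⟨hFm, hFM⟩
  have hd0pos : 0 < d0 := lt_of_lt_of_le hm hd0mem.1
  have hd0eq' : tildeFn f12 d0 + tildeFn f13 d0 = 0 := hd0eq
  have hsum_mono0 : StrictMonoOn (fun t => tildeFn f12 t + tildeFn f13 t) (Set.Ioi 0) :=
    fun x hx y hy hxy => add_lt_add (memF_mono h12 hx hy hxy) (memF_mono h13 hx hy hxy)
  have huniq : ∀ d' : ℝ, 0 < d' → tildeFn f12 d' + tildeFn f13 d' = 0 → d' = d0 :=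
    fun d' hd' heq' => hsum_mono0.injOn (Set.mem_Ioi.mpr hd') (Set.mem_Ioi.mpr hd0pos)
      (by simpa using heq'.trans hd0eq'.symm)
  -- the limit
  have hlow : ∀ᶠ d in 𝓝[>] (0:ℝ), d0 - d ≤ case2d12 f12 f13 d := by
    filter_upwards [self_mem_nhdsWithin] with d hd
    have := d13_gt h12 h13 hd0pos hd0eq' (Set.mem_Ioi.mp hd)
    linarith
  have hupp : ∀ᶠ d in 𝓝[>] (0:ℝ), case2d12 f12 f13 d ≤ d0 := by
    filter_upwards [self_mem_nhdsWithin] with d hd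
    exact (d12_lt h12 h13 hd0pos hd0eq' (Set.mem_Ioi.mp hd)).le
  have hidlim : Tendsto (fun d : ℝ => d) (𝓝[>] (0:ℝ)) (𝓝 0) :=
    tendsto_id.mono_left nhdsWithin_le_nhds
  have hlolim : Tendsto (fun d : ℝ => d0 - d) (𝓝[>] (0:ℝ)) (𝓝 d0) := by
    simpa using tendsto_const_nhds.sub hidlim
  have hlim12 : Tendsto (case2d12 f12 f13) (𝓝[>] (0:ℝ)) (𝓝 d0) :=
    tendsto_of_tendsto_of_tendsto_of_le_of_le' hlolim tendsto_const_nhds hlow hupp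
  have hlim13 : Tendsto (fun d => case2d12 f12 f13 d + d) (𝓝[>] (0:ℝ)) (𝓝 d0) := by
    simpa using hlim12.add hidlim
  have htendval : Tendsto (fun d => tildeFn f13 (case2d12 f12 f13 d + d)) (𝓝[>] (0:ℝ))
      (𝓝 (tildeFn f13 d0)) :=
    ((memF_hasDerivAt h13 hd0pos).continuousAt.tendsto).comp hlim13
  have hglim : Tendsto (tildeFn (g23Case2 f12 f13)) (𝓝[>] (0:ℝ)) (𝓝 (tildeFn f13 d0)) := by
    refine Filter.Tendsto.congr' ?_ htendval
    filter_upwards [self_mem_nhdsWithin] with d hd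
    have hd' : (d:ℝ) ≠ 0 := ne_of_gt (Set.mem_Ioi.mp hd)
    simp only [tildeFn, g23Case2]
    first
    | (field_simp; ring)
    | field_simp
    | ring
  refine ⟨d0, hd0pos, hd0eq', huniq, hglim, ?_⟩
  -- the derivative
  intro d hd
  obtain ⟨hu, heqd⟩ := d12_spec h12 h13 hd0pos hd0eq' hd.le
  set u := case2d12 f12 f13 d with hu_def
  have hs0 : 0 < u + d := by linarith
  set s := u + d with hs_def
  have hs : 0 < s := hs0
  set A := deriv (tildeFn f12) u with hA_def
  set B := deriv (tildeFn f13) s with hB_def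
  have hA : 0 < A := h12.2.1 u hu
  have hB : 0 < B := h13.2.1 s hs
  have hBne : B ≠ 0 := ne_of_gt hB
  have hABne : A + B ≠ 0 := by positivity
  have hy0 : tildeFn f13 s = -(tildeFn f12 u) := by linarith
  have hinner : HasDerivAt (fun t => -(tildeFn f12 t)) (-A) u := (memF_hasDerivAt h12 hu).neg
  have hout : HasDerivAt (invT f13) B⁻¹ (-(tildeFn f12 u)) := by
    rw [← hy0]; exact invT_hasDerivAt h13 hs
  have hcomp1 : HasDerivAt (fun t => invT f13 (-(tildeFn f12 t))) (B⁻¹ * (-A)) u :=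
    HasDerivAt.comp (h₂ := invT f13) (h := fun t => -(tildeFn f12 t)) u hout hinner
  have hχ : HasDerivAt (fun t => invT f13 (-(tildeFn f12 t)) - t) (B⁻¹ * (-A) - 1) u :=
    hcomp1.sub (hasDerivAt_id u)
  have hfrac : B⁻¹ * (-A) - 1 = -((A + B) / B) := by
    first
    | (field_simp; ring)
    | field_simp
    | ring
  have hχ'ne : B⁻¹ * (-A) - 1 ≠ 0 := by
    rw [hfrac]
    exact neg_ne_zero.mpr (ne_of_gt (div_pos (by linarith) hB))
  have hfg : ∀ᶠ y in 𝓝 d,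
      (fun t => invT f13 (-(tildeFn f12 t)) - t) (case2d12 f12 f13 y) = y := by
    filter_upwards [Ioi_mem_nhds hd] with y hy
    have hy' : (0:ℝ) < y := hy
    obtain ⟨huy, heqy⟩ := d12_spec h12 h13 hd0pos hd0eq' hy'.le
    have h13y : -(tildeFn f12 (case2d12 f12 f13 y)) = tildeFn f13 (case2d12 f12 f13 y + y) := by
      linarith
    show invT f13 (-(tildeFn f12 (case2d12 f12 f13 y))) - case2d12 f12 f13 y = y
    rw [h13y, invT_eq h13 (by linarith : (0:ℝ) < case2d12 f12 f13 y + y)]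
    ring
  have hd12deriv : HasDerivAt (case2d12 f12 f13) (B⁻¹ * (-A) - 1)⁻¹ d :=
    HasDerivAt.of_local_left_inverse (d12_contAt h12 h13 hd0pos hd0eq' hd) hχ hχ'ne hfg
  have hd13deriv : HasDerivAt (fun y => case2d12 f12 f13 y + y) ((B⁻¹ * (-A) - 1)⁻¹ + 1) d :=
    hd12deriv.add (hasDerivAt_id d)
  have hcomp2 : HasDerivAt (fun y => tildeFn f13 (case2d12 f12 f13 y + y))
      (B * ((B⁻¹ * (-A) - 1)⁻¹ + 1)) d :=
    HasDerivAt.comp (h₂ := tildeFn f13) (h := fun y => case2d12 f12 f13 y + y) d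
      (memF_hasDerivAt h13 hs) hd13deriv
  have hEq : (fun y => tildeFn f13 (case2d12 f12 f13 y + y)) =ᶠ[𝓝 d]
      tildeFn (g23Case2 f12 f13) := by
    filter_upwards [Ioi_mem_nhds hd] with y hy
    have hy' : (y:ℝ) ≠ 0 := ne_of_gt (Set.mem_Ioi.mp hy)
    simp only [tildeFn, g23Case2]
    first
    | (field_simp; ring)
    | field_simp
    | ring
  have hfinal : HasDerivAt (tildeFn (g23Case2 f12 f13)) (B * ((B⁻¹ * (-A) - 1)⁻¹ + 1)) d :=
    hcomp2.congr_of_eventuallyEq hEq.symm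
  have hval : B * ((B⁻¹ * (-A) - 1)⁻¹ + 1) = A * B / (A + B) := by
    rw [hfrac, inv_neg, inv_div]
    first
    | (field_simp; ring)
    | field_simp
    | ring
  constructor
  · rw [hfinal.deriv, hval]
  · rw [hfinal.deriv, hval]
    exact div_pos (mul_pos hA hB) (by linarith)
end
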